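/- arXiv:1403.7643 — 4 statements merged into one kernel-verified Lean document; each statement's English description precedes it below -/
import Mathlib

section
/- Let φ : ℝ → ℝ₊ be a quasi-concave function (i.e. having convex superlevel sets) whose maximum is attained at a point a ∈ ℝ, and let μ be the measure with density φ. Then for all Borel sets A, B ⊂ ℝ with a ∈ A ∩ B and every λ ∈ [0,1], μ((1-λ)A + λB) ≥ (1-λ)μ(A) + λμ(B). -/
open MeasureTheory Set Pointwise

/-! Slice the density into its superlevel sets `Lₜ = {t ≤ φ}`. By the layer-cake formula
`μ C = ∫ₜ volume (Lₜ ∩ C)`, so it suffices to prove the inequality for Lebesgue measure level by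
level. Each `Lₜ` is convex, so `(1-l)(Lₜ ∩ A) + l(Lₜ ∩ B) ⊆ Lₜ ∩ ((1-l)A + lB)`, and the
one-dimensional Brunn–Minkowski inequality `|K| + |L| ≤ |K + L|` applies as soon as both slices are
nonempty. This is where the maximum point `a ∈ A ∩ B` enters: `Lₜ` is either empty or contains
`a`. -/

namespace Real

/-- `min L +ᵥ K` and `max K +ᵥ L` both lie in `K + L` and meet only at `max K + min L`. -/
theorem volume_add_volume_le_volume_add_of_isCompact {K L : Set ℝ} (hK : IsCompact K)
    (hL : IsCompact L) (hK₀ : K.Nonempty) (hL₀ : L.Nonempty) :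
    volume K + volume L ≤ volume (K + L) := by
  set k := sSup K
  set m := sInf L
  have hkK : k ∈ K := hK.sSup_mem hK₀
  have hmL : m ∈ L := hL.sInf_mem hL₀
  have hunion : (m +ᵥ K) ∪ (k +ᵥ L) ⊆ K + L := by
    rintro _ (⟨y, hy, rfl⟩ | ⟨z, hz, rfl⟩)
    · exact ⟨y, hy, m, hmL, add_comm y m⟩
    · exact ⟨k, hkK, z, hz, rfl⟩
  have hinter : (m +ᵥ K) ∩ (k +ᵥ L) ⊆ {m + k} := by
    rintro _ ⟨⟨y, hy, rfl⟩, ⟨z, hz, hyz⟩⟩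
    have hy' : y ≤ k := le_csSup hK.bddAbove hy
    have hz' : m ≤ z := csInf_le hL.bddBelow hz
    change k + z = m + y at hyz
    change m + y = m + k
    linarith
  calc volume K + volume L = volume (m +ᵥ K) + volume (k +ᵥ L) := by
        rw [measure_vadd, measure_vadd]
    _ = volume ((m +ᵥ K) ∪ (k +ᵥ L)) + volume ((m +ᵥ K) ∩ (k +ᵥ L)) :=
        (measure_union_add_inter _ (hL.measurableSet.const_vadd k)).symm
    _ = volume ((m +ᵥ K) ∪ (k +ᵥ L)) := by
        rw [measure_mono_null hinter (measure_singleton _), add_zero]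
    _ ≤ volume (K + L) := measure_mono hunion

theorem volume_add_volume_le_volume_add {A B : Set ℝ} (hA : MeasurableSet A)
    (hB : MeasurableSet B) (hA₀ : A.Nonempty) (hB₀ : B.Nonempty) :
    volume A + volume B ≤ volume (A + B) := by
  obtain ⟨a, ha⟩ := hA₀
  obtain ⟨b, hb⟩ := hB₀
  rw [hA.measure_eq_iSup_isCompact, hB.measure_eq_iSup_isCompact]
  simp only [iSup_and']
  refine ENNReal.biSup_add_biSup_le' ⟨∅, empty_subset A, isCompact_empty⟩
    ⟨∅, empty_subset B, isCompact_empty⟩ fun K ⟨hKA, hK⟩ L ⟨hLB, hL⟩ => ?_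
  -- Inserting a point of `A` (resp. `B`) makes the compacts nonempty.
  calc volume K + volume L ≤ volume (insert a K) + volume (insert b L) :=
        add_le_add (measure_mono (subset_insert _ _)) (measure_mono (subset_insert _ _))
    _ ≤ volume (insert a K + insert b L) :=
        volume_add_volume_le_volume_add_of_isCompact (hK.insert a) (hL.insert b)
          (insert_nonempty _ _) (insert_nonempty _ _)
    _ ≤ volume (A + B) :=
        measure_mono (add_subset_add (insert_subset ha hKA) (insert_subset hb hLB))

theorem ofReal_mul_volume_add_ofReal_mul_volume_le {A B : Set ℝ} (hA : MeasurableSet A)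
    (hB : MeasurableSet B) (hA₀ : A.Nonempty) (hB₀ : B.Nonempty) {c d : ℝ} (hc : 0 ≤ c)
    (hd : 0 ≤ d) :
    ENNReal.ofReal c * volume A + ENNReal.ofReal d * volume B ≤ volume (c • A + d • B) := by
  have hvol {r : ℝ} (hr : 0 ≤ r) (S : Set ℝ) : volume (r • S) = ENNReal.ofReal r * volume S := by
    simpa using Measure.addHaar_smul_of_nonneg volume hr S
  rw [← hvol hc, ← hvol hd]
  exact volume_add_volume_le_volume_add (hA.const_smul₀ c) (hB.const_smul₀ d) hA₀.smul_set
    hB₀.smul_set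

end Real

theorem Convex.smul_inter_add_smul_inter_subset {𝕜 E : Type*} [Semiring 𝕜] [PartialOrder 𝕜]
    [AddCommMonoid E] [Module 𝕜 E] {S : Set E} (hS : Convex 𝕜 S) (A B : Set E) {a b : 𝕜}
    (ha : 0 ≤ a) (hb : 0 ≤ b) (hab : a + b = 1) :
    a • (S ∩ A) + b • (S ∩ B) ⊆ S ∩ (a • A + b • B) := by
  rintro _ ⟨_, ⟨x, ⟨hxS, hxA⟩, rfl⟩, _, ⟨y, ⟨hyS, hyB⟩, rfl⟩, rfl⟩
  exact ⟨hS hxS hyS ha hb hab, _, smul_mem_smul_set hxA, _, smul_mem_smul_set hyB, rfl⟩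

theorem MeasureTheory.withDensity_ofReal_apply_eq_lintegral_measure_superlevel_inter
    {α : Type*} [MeasurableSpace α] (μ : Measure α) {f : α → ℝ} (hf : Measurable f)
    (hf₀ : ∀ x, 0 ≤ f x) {C : Set α} (hC : MeasurableSet C) :
    μ.withDensity (fun x => ENNReal.ofReal (f x)) C =
      ∫⁻ t in Ioi 0, μ ({x | t ≤ f x} ∩ C) := by
  rw [withDensity_apply _ hC, lintegral_eq_lintegral_meas_le _ (.of_forall hf₀) hf.aemeasurable]
  refine lintegral_congr fun t => ?_
  rw [Measure.restrict_apply (measurableSet_le measurable_const hf)]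

/-- Let φ : ℝ → ℝ₊ be quasi-concave with maximum attained at a ∈ ℝ, and
μ the measure with density φ. Then for Borel A, B ∋ a and l ∈ [0,1],
μ((1-l)A + lB) ≥ (1-l)μ(A) + lμ(B). -/
theorem stmt3 (φ : ℝ → ℝ) (hφmeas : Measurable φ) (hφpos : ∀ x, 0 ≤ φ x)
    (hφqc : ∀ x y : ℝ, ∀ l : ℝ, l ∈ Set.Icc (0:ℝ) 1 →
      φ ((1 - l) * x + l * y) ≥ min (φ x) (φ y))
    (a : ℝ) (hmax : ∀ x, φ x ≤ φ a)
    (μ : Measure ℝ) (hμ : μ = volume.withDensity (fun x => ENNReal.ofReal (φ x)))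
    (A B : Set ℝ) (hA : MeasurableSet A) (hB : MeasurableSet B)
    (haA : a ∈ A) (haB : a ∈ B)
    (l : ℝ) (hl : l ∈ Set.Icc (0:ℝ) 1) :
    μ ((1 - l) • A + l • B) ≥
      ENNReal.ofReal (1 - l) * μ A + ENNReal.ofReal l * μ B := by
  obtain ⟨hl₀, hl₁⟩ := hl
  set S := (1 - l) • A + l • B
  set T := toMeasurable μ S
  have hlayer {C : Set ℝ} (hC : MeasurableSet C) :=
    hμ ▸ withDensity_ofReal_apply_eq_lintegral_measure_superlevel_inter volume hφmeas hφpos hC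
  have hconvex (t : ℝ) : Convex ℝ {x | t ≤ φ x} := by
    intro x hx y hy c d hc hd hcd
    obtain rfl : c = 1 - d := by linarith
    exact (le_min hx hy).trans (hφqc x y d ⟨hd, by linarith⟩)
  have hlevel (t : ℝ) : ENNReal.ofReal (1 - l) * volume ({x | t ≤ φ x} ∩ A) +
      ENNReal.ofReal l * volume ({x | t ≤ φ x} ∩ B) ≤ volume ({x | t ≤ φ x} ∩ T) := by
    by_cases hta : t ≤ φ a
    · have hsuper : MeasurableSet {x | t ≤ φ x} := measurableSet_le measurable_const hφmeas
      calc _ ≤ volume ((1 - l) • ({x | t ≤ φ x} ∩ A) + l • ({x | t ≤ φ x} ∩ B)) :=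
            Real.ofReal_mul_volume_add_ofReal_mul_volume_le (hsuper.inter hA) (hsuper.inter hB)
              ⟨a, hta, haA⟩ ⟨a, hta, haB⟩ (by linarith) hl₀
        _ ≤ volume ({x | t ≤ φ x} ∩ S) :=
            measure_mono ((hconvex t).smul_inter_add_smul_inter_subset A B (by linarith) hl₀
              (by ring))
        _ ≤ volume ({x | t ≤ φ x} ∩ T) :=
            measure_mono (inter_subset_inter_right _ (subset_toMeasurable μ S))
    · have hempty : {x | t ≤ φ x} = ∅ :=
        eq_empty_of_forall_notMem fun x hx => hta (le_trans hx (hmax x))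
      simp [hempty]
  rw [ge_iff_le, ← measure_toMeasurable S, hlayer hA, hlayer hB,
    hlayer (measurableSet_toMeasurable μ S)]
  calc _ ≤ (∫⁻ t in Ioi 0, ENNReal.ofReal (1 - l) * volume ({x | t ≤ φ x} ∩ A)) +
        ∫⁻ t in Ioi 0, ENNReal.ofReal l * volume ({x | t ≤ φ x} ∩ B) :=
        add_le_add (lintegral_const_mul_le _ _) (lintegral_const_mul_le _ _)
    _ ≤ _ := (le_lintegral_add _ _).trans (lintegral_mono hlevel)
end

section
/- Let μ₁,…,μₙ be measures on ℝ with densities φᵢ : ℝ → ℝ₊ that are non-decreasing on (-∞,0] and non-increasing on [0,∞). Let μ = μ₁ ⊗ ⋯ ⊗ μₙ and let A = ∏ᵢ Aᵢ, B = ∏ᵢ Bᵢ be products of Borel subsets of ℝ with 0 ∈ A ∩ B. Then for every λ ∈ [0,1], μ((1-λ)A + λB)^{1/n} ≥ (1-λ)μ(A)^{1/n} + λμ(B)^{1/n}. -/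
/-!
Every unimodal density `φ` with mode `0` is quasiconcave, so its level sets `{φ > r}` are
intervals which, when nonempty, contain `0`. Writing `ν(S) = ∫₀^∞ |{φ > r} ∩ S| dr` (layer cake),
the one-dimensional Brunn–Minkowski inequality `|sX + tY| ≥ s|X| + t|Y|` applied to the sections
`{φ > r} ∩ A` and `{φ > r} ∩ B` (both contain `0`) gives the linear inequality
`ν((1-λ)A + λB) ≥ (1-λ)ν(A) + λν(B)` in each coordinate. The product measure of a box is the
product of the coordinate measures, and the `n`-th root of a product of `n` factors is
superadditive (Hölder's inequality), which turns the coordinatewise linear bounds into the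
`1/n`-concavity of the product measure.
-/

open MeasureTheory Set Pointwise

theorem Real.volume_add_volume_le_volume_add_of_isCompact_s4 {K L : Set ℝ} (hK : IsCompact K)
    (hL : IsCompact L) (hK₀ : K.Nonempty) (hL₀ : L.Nonempty) :
    volume K + volume L ≤ volume (K + L) := by
  set x := sSup K
  set y := sInf L
  have hxK : x ∈ K := hK.sSup_mem hK₀
  have hyL : y ∈ L := hL.sInf_mem hL₀
  -- The translates `y +ᵥ K` and `x +ᵥ L` both lie in `K + L` and meet at most in `x + y`.
  have hinter : (y +ᵥ K) ∩ (x +ᵥ L) ⊆ {x + y} := by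
    rintro _ ⟨⟨a, ha, rfl⟩, ⟨b, hb, hab⟩⟩
    have hax : a ≤ x := le_csSup hK.bddAbove ha
    have hyb : y ≤ b := csInf_le hL.bddBelow hb
    simp only [vadd_eq_add] at hab ⊢
    rw [mem_singleton_iff]
    linarith
  calc volume K + volume L = volume (y +ᵥ K) + volume (x +ᵥ L) := by
        rw [measure_vadd, measure_vadd]
    _ = volume ((y +ᵥ K) ∪ (x +ᵥ L)) := by
        rw [← measure_union_add_inter _ (hL.measurableSet.const_vadd x),
          measure_mono_null hinter (measure_singleton _), add_zero]
    _ ≤ volume (K + L) := by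
        refine measure_mono (union_subset ?_ (vadd_set_subset_add hxK))
        rw [add_comm K L]
        exact vadd_set_subset_add hyL

theorem Real.volume_add_volume_le_volume_add_s4 {A B : Set ℝ} (hA : MeasurableSet A)
    (hB : MeasurableSet B) (hA₀ : A.Nonempty) (hB₀ : B.Nonempty) :
    volume A + volume B ≤ volume (A + B) := by
  obtain ⟨a, ha⟩ := hA₀
  obtain ⟨b, hb⟩ := hB₀
  rw [hA.measure_eq_iSup_isCompact, hB.measure_eq_iSup_isCompact]
  simp_rw [iSup_and']
  refine ENNReal.biSup_add_biSup_le' ⟨∅, empty_subset _, isCompact_empty⟩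
    ⟨∅, empty_subset _, isCompact_empty⟩ fun K ⟨hKA, hK⟩ L ⟨hLB, hL⟩ => ?_
  calc volume K + volume L ≤ volume (insert a K) + volume (insert b L) := by
        gcongr <;> exact subset_insert _ _
    _ ≤ volume (insert a K + insert b L) :=
        volume_add_volume_le_volume_add_of_isCompact_s4 (hK.insert a) (hL.insert b)
          (insert_nonempty _ _) (insert_nonempty _ _)
    _ ≤ volume (A + B) :=
        measure_mono (add_subset_add (insert_subset ha hKA) (insert_subset hb hLB))

theorem Real.smul_volume_add_smul_volume_le_volume_add {A B : Set ℝ} (hA : MeasurableSet A)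
    (hB : MeasurableSet B) (hA₀ : A.Nonempty) (hB₀ : B.Nonempty) {s t : ℝ} (hs : 0 ≤ s)
    (ht : 0 ≤ t) :
    ENNReal.ofReal s * volume A + ENNReal.ofReal t * volume B ≤ volume (s • A + t • B) := by
  have hvol : ∀ {r : ℝ}, 0 ≤ r → ∀ S : Set ℝ, volume (r • S) = ENNReal.ofReal r * volume S :=
    fun hr S => by rw [Measure.addHaar_smul_of_nonneg _ hr, Module.finrank_self, pow_one]
  rw [← hvol hs, ← hvol ht]
  exact volume_add_volume_le_volume_add_s4 (hA.const_smul₀ s) (hB.const_smul₀ t) hA₀.smul_set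
    hB₀.smul_set

theorem withDensity_ofReal_apply_eq_lintegral_measure_inter {α : Type*} [MeasurableSpace α]
    (μ : Measure α) {f : α → ℝ} (hf : Measurable f) (hf₀ : ∀ x, 0 ≤ f x) ⦃S : Set α⦄
    (hS : MeasurableSet S) :
    μ.withDensity (fun x => ENNReal.ofReal (f x)) S
      = ∫⁻ t in Ioi 0, μ ({x | t < f x} ∩ S) := by
  rw [withDensity_apply _ hS,
    lintegral_eq_lintegral_meas_lt _ (.of_forall hf₀) hf.aemeasurable]
  refine setLIntegral_congr_fun measurableSet_Ioi fun t _ => ?_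
  rw [Measure.restrict_apply (measurableSet_lt measurable_const hf)]

theorem MonotoneOn.quasiconcaveOn_univ {𝕜 β : Type*} [Field 𝕜] [LinearOrder 𝕜]
    [IsStrictOrderedRing 𝕜] [Preorder β] {f : 𝕜 → β} {c : 𝕜} (hmono : MonotoneOn f (Iic c))
    (hanti : AntitoneOn f (Ici c)) : QuasiconcaveOn 𝕜 univ f := by
  refine convex_univ.quasiconcaveOn_of_convex_ge fun r => convex_iff_ordConnected.2 ⟨?_⟩
  rintro x hx y hy z ⟨hxz, hzy⟩
  rcases le_total z c with hzc | hcz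
  · exact hx.trans (hmono (hxz.trans hzc) hzc hxz)
  · exact hy.trans (hanti hcz (hcz.trans hzy) hzy)

theorem MonotoneOn.apply_le_of_antitoneOn {α β : Type*} [LinearOrder α] [Preorder β]
    {f : α → β} {c : α} (hmono : MonotoneOn f (Iic c)) (hanti : AntitoneOn f (Ici c)) (x : α) :
    f x ≤ f c := by
  rcases le_total x c with hxc | hcx
  · exact hmono hxc self_mem_Iic hxc
  · exact hanti self_mem_Ici hcx hcx

theorem QuasiconcaveOn.smul_withDensity_add_smul_withDensity_le {φ : ℝ → ℝ}
    {c : ℝ} (hφ : QuasiconcaveOn ℝ univ φ) (hφ_le : ∀ x, φ x ≤ φ c) (hφ_meas : Measurable φ)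
    (hφ₀ : ∀ x, 0 ≤ φ x) {A B : Set ℝ} (hA : MeasurableSet A) (hB : MeasurableSet B)
    (hcA : c ∈ A) (hcB : c ∈ B) {s t : ℝ} (hs : 0 ≤ s) (ht : 0 ≤ t)
    (hst : s + t = 1) :
    ENNReal.ofReal s * volume.withDensity (fun x => ENNReal.ofReal (φ x)) A
        + ENNReal.ofReal t * volume.withDensity (fun x => ENNReal.ofReal (φ x)) B
      ≤ volume.withDensity (fun x => ENNReal.ofReal (φ x)) (s • A + t • B) := by
  set ν := volume.withDensity fun x => ENNReal.ofReal (φ x)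
  set U : ℝ → Set ℝ := fun r => {x | r < φ x}
  have hU : ∀ r, MeasurableSet (U r) := fun r => measurableSet_lt measurable_const hφ_meas
  have level : ∀ r, ENNReal.ofReal s * volume (U r ∩ A) + ENNReal.ofReal t * volume (U r ∩ B)
      ≤ volume (U r ∩ (s • A + t • B)) := by
    intro r
    by_cases hc : r < φ c
    · have hconv : Convex ℝ (U r) := by simpa using hφ.convex_gt r
      calc _ ≤ volume (s • (U r ∩ A) + t • (U r ∩ B)) :=
            Real.smul_volume_add_smul_volume_le_volume_add ((hU r).inter hA) ((hU r).inter hB)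
              ⟨c, hc, hcA⟩ ⟨c, hc, hcB⟩ hs ht
        _ ≤ volume (U r ∩ (s • A + t • B)) := by
            refine measure_mono (subset_inter ?_ ?_)
            · exact (add_subset_add (smul_set_mono inter_subset_left)
                (smul_set_mono inter_subset_left)).trans (hconv.set_combo_subset hs ht hst)
            · exact add_subset_add (smul_set_mono inter_subset_right)
                (smul_set_mono inter_subset_right)
    · have hUr : U r = ∅ :=
        eq_empty_of_forall_notMem fun x hx => hc (lt_of_lt_of_le hx (hφ_le x))
      simp [hUr]
  have layer := withDensity_ofReal_apply_eq_lintegral_measure_inter volume hφ_meas hφ₀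
  -- `s • A + t • B` need not be Borel; the layer cake formula is applied to a measurable hull.
  set M := toMeasurable ν (s • A + t • B)
  calc ENNReal.ofReal s * ν A + ENNReal.ofReal t * ν B
      = (∫⁻ r in Ioi 0, ENNReal.ofReal s * volume (U r ∩ A))
          + ∫⁻ r in Ioi 0, ENNReal.ofReal t * volume (U r ∩ B) := by
        rw [layer hA, layer hB, lintegral_const_mul' _ _ ENNReal.ofReal_ne_top,
          lintegral_const_mul' _ _ ENNReal.ofReal_ne_top]
    _ ≤ ∫⁻ r in Ioi 0, volume (U r ∩ M) :=
        (le_lintegral_add _ _).trans (lintegral_mono fun r =>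
          (level r).trans (measure_mono (inter_subset_inter_right _ (subset_toMeasurable _ _))))
    _ = ν (s • A + t • B) := by
        rw [← layer (measurableSet_toMeasurable _ _), measure_toMeasurable]

theorem ENNReal.prod_rpow_add_prod_rpow_le {ι : Type*} (s : Finset ι) (u v : ι → ENNReal)
    {p : ι → ℝ} (hp : ∑ i ∈ s, p i = 1) (hp₀ : ∀ i ∈ s, 0 ≤ p i) :
    ∏ i ∈ s, u i ^ p i + ∏ i ∈ s, v i ^ p i ≤ ∏ i ∈ s, (u i + v i) ^ p i := by
  -- Hölder's inequality for the counting measure on `Bool`.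
  simpa [lintegral_fintype, add_comm] using ENNReal.lintegral_prod_norm_pow_le
    (μ := Measure.count) (f := fun i b => cond b (u i) (v i)) s
    (fun i _ => measurable_of_finite _ |>.aemeasurable) hp hp₀

theorem ENNReal.prod_rpow_one_div_add_le {n : ℕ} (hn : n ≠ 0) (u v : Fin n → ENNReal) :
    (∏ i, u i) ^ (1 / (n : ℝ)) + (∏ i, v i) ^ (1 / (n : ℝ))
      ≤ (∏ i, (u i + v i)) ^ (1 / (n : ℝ)) := by
  simp_rw [← ENNReal.prod_rpow_of_nonneg (by positivity : (0 : ℝ) ≤ 1 / n)]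
  exact prod_rpow_add_prod_rpow_le _ u v (by simp [hn]) fun _ _ => by positivity

theorem ENNReal.prod_const_mul_rpow_one_div {n : ℕ} (hn : n ≠ 0) (c : ENNReal)
    (x : Fin n → ENNReal) :
    (∏ i, c * x i) ^ (1 / (n : ℝ)) = c * (∏ i, x i) ^ (1 / (n : ℝ)) := by
  rw [Finset.prod_mul_distrib, mul_rpow_of_nonneg _ _ (by positivity), Finset.prod_const,
    Finset.card_univ, Fintype.card_fin, ← rpow_natCast, ← rpow_mul,
    mul_one_div_cancel (by simpa), rpow_one]

theorem Set.univ_pi_add_subset {ι : Type*} {α : ι → Type*} [∀ i, Add (α i)]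
    (S T : ∀ i, Set (α i)) : univ.pi (fun i => S i + T i) ⊆ univ.pi S + univ.pi T := by
  intro x hx
  simp only [mem_univ_pi, Set.mem_add] at hx
  choose a ha b hb hab using hx
  exact ⟨a, fun i _ => ha i, b, fun i _ => hb i, funext hab⟩

/-- product of n unimodal (mode 0) one-dimensional measures is
(1/n)-concave on products of Borel sets containing the origin. -/
theorem stmt4 (n : ℕ) (hn : 0 < n) (φ : Fin n → ℝ → ℝ)
    (hφmeas : ∀ i, Measurable (φ i)) (hφpos : ∀ i x, 0 ≤ φ i x)
    (hφmono : ∀ i, MonotoneOn (φ i) (Set.Iic 0))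
    (hφanti : ∀ i, AntitoneOn (φ i) (Set.Ici 0))
    (μ : Measure (Fin n → ℝ))
    (hμ : μ = Measure.pi (fun i => volume.withDensity (fun x => ENNReal.ofReal (φ i x))))
    (A B : Set (Fin n → ℝ)) (Ai Bi : Fin n → Set ℝ)
    (hAi : ∀ i, MeasurableSet (Ai i)) (hBi : ∀ i, MeasurableSet (Bi i))
    (hA : A = Set.pi Set.univ Ai) (hB : B = Set.pi Set.univ Bi)
    (h0A : (0 : Fin n → ℝ) ∈ A) (h0B : (0 : Fin n → ℝ) ∈ B)
    (l : ℝ) (hl : l ∈ Set.Icc (0:ℝ) 1) :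
    (μ ((1 - l) • A + l • B)) ^ (1 / (n : ℝ)) ≥
      ENNReal.ofReal (1 - l) * (μ A) ^ (1 / (n : ℝ)) +
      ENNReal.ofReal l * (μ B) ^ (1 / (n : ℝ)) := by
  subst hμ hA hB
  set ν := fun i => volume.withDensity fun x => ENNReal.ofReal (φ i x)
  have hcoord : ∀ i, ENNReal.ofReal (1 - l) * ν i (Ai i) + ENNReal.ofReal l * ν i (Bi i)
      ≤ ν i ((1 - l) • Ai i + l • Bi i) := fun i =>
    ((hφmono i).quasiconcaveOn_univ (hφanti i)).smul_withDensity_add_smul_withDensity_le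
      ((hφmono i).apply_le_of_antitoneOn (hφanti i)) (hφmeas i) (hφpos i) (hAi i)
      (hBi i) (by simpa using h0A i) (by simpa using h0B i) (by linarith [hl.2]) hl.1 (by ring)
  have hbox : univ.pi (fun i => (1 - l) • Ai i + l • Bi i)
      ⊆ (1 - l) • univ.pi Ai + l • univ.pi Bi := by
    rw [smul_set_univ_pi, smul_set_univ_pi]
    exact univ_pi_add_subset _ _
  calc ENNReal.ofReal (1 - l) * (Measure.pi ν (univ.pi Ai)) ^ (1 / (n : ℝ))
        + ENNReal.ofReal l * (Measure.pi ν (univ.pi Bi)) ^ (1 / (n : ℝ))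
      = (∏ i, ENNReal.ofReal (1 - l) * ν i (Ai i)) ^ (1 / (n : ℝ))
          + (∏ i, ENNReal.ofReal l * ν i (Bi i)) ^ (1 / (n : ℝ)) := by
        rw [Measure.pi_pi, Measure.pi_pi, ENNReal.prod_const_mul_rpow_one_div hn.ne',
          ENNReal.prod_const_mul_rpow_one_div hn.ne']
    _ ≤ (∏ i, ν i ((1 - l) • Ai i + l • Bi i)) ^ (1 / (n : ℝ)) :=
        (ENNReal.prod_rpow_one_div_add_le hn.ne' _ _).trans
          (by gcongr with i; exact hcoord i)
    _ ≤ Measure.pi ν ((1 - l) • univ.pi Ai + l • univ.pi Bi) ^ (1 / (n : ℝ)) := by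
        rw [← Measure.pi_pi]
        exact ENNReal.rpow_le_rpow (measure_mono hbox) (by positivity)
end

section
/- The measure μ on ℝ with density φ(x) = 1 for x ∈ [-1,2] and φ(x) = 0 otherwise, together with A = [-1,1], satisfies: t ↦ μ(tA) is (1/n)-concave on [0,∞) (with n = 1, i.e. concave where positive), but t ↦ μ(eᵗA) is not log-concave on ℝ. -/
/-!
For `t ≥ 0` the set `t • [-1,1] ∩ [-1,2]` is `[-min t 1, min t 2]`, so
`μ(tA) = min t 2 + min t 1`, a sum of two concave functions. Along `t = eˢ`, however, the
middle piece `1 + eˢ` (for `0 ≤ s ≤ log 2`) is strictly log-convex: at `s = 0, log c, 2 log c`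
with `1 < c ≤ √2` the values `2, 1 + c, 1 + c²` satisfy `(1 + c)² < 2 (1 + c²)`.
-/

open MeasureTheory Set Pointwise

lemma withDensity_ofReal_indicator_one {α : Type*} [MeasurableSpace α] (μ : Measure α)
    {s : Set α} (hs : MeasurableSet s) :
    μ.withDensity (fun x => ENNReal.ofReal (s.indicator 1 x)) = μ.restrict s := by
  have hdens : (fun x => ENNReal.ofReal (s.indicator 1 x)) = s.indicator 1 := by
    funext x
    by_cases hx : x ∈ s <;> simp [hx]
  rw [hdens, withDensity_indicator_one hs]

lemma smul_Icc_of_nonneg {K : Type*} [Field K] [LinearOrder K] [IsStrictOrderedRing K]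
    {r a b : K} (hr : 0 ≤ r) (hab : a ≤ b) :
    r • Icc a b = Icc (r * a) (r * b) := by
  rcases hr.eq_or_lt with rfl | hr
  · simp [zero_smul_set (nonempty_Icc.2 hab), singleton_zero]
  · exact LinearOrderedField.smul_Icc hr

lemma volume_restrict_Icc_Icc_neg_toReal {a b t : ℝ} (ha : a ≤ 0) (hb : 0 ≤ b)
    (ht : 0 ≤ t) :
    (volume.restrict (Icc a b) (Icc (-t) t)).toReal = min t b + min t (-a) := by
  have hmax : max (-t) a = -min t (-a) := by rw [← max_neg_neg, neg_neg]
  rw [Measure.restrict_apply measurableSet_Icc, Icc_inter_Icc, Real.volume_Icc, hmax,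
    ENNReal.toReal_ofReal]
  · ring
  · have : 0 ≤ min t (-a) := le_min ht (by linarith)
    have : 0 ≤ min t b := le_min ht hb
    linarith

lemma concaveOn_min_add_min (b c : ℝ) : ConcaveOn ℝ univ (fun t : ℝ => min t b + min t c) :=
  ((concaveOn_id convex_univ).inf (concaveOn_const b convex_univ)).add
    ((concaveOn_id convex_univ).inf (concaveOn_const c convex_univ))

lemma not_concaveOn_log_min_exp_add_min_exp :
    ¬ ConcaveOn ℝ univ (fun s : ℝ => Real.log (min (Real.exp s) 2 + min (Real.exp s) 1)) := by
  intro hconc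
  obtain ⟨c, hc1, hc2⟩ : ∃ c : ℝ, 1 < c ∧ c ^ 2 ≤ 2 :=
    ⟨4 / 3, by norm_num, by norm_num⟩
  have hc : 0 < c := by linarith
  have h := hconc.2 (mem_univ 0) (mem_univ (2 * Real.log c)) (by norm_num : (0 : ℝ) ≤ 1 / 2)
    (by norm_num : (0 : ℝ) ≤ 1 / 2) (by norm_num)
  have hmid : (1 / 2 : ℝ) * 0 + 1 / 2 * (2 * Real.log c) = Real.log c := by ring
  have hexp : Real.exp (2 * Real.log c) = c ^ 2 := by
    rw [mul_comm, Real.exp_mul, Real.exp_log hc]; norm_num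
  simp only [smul_eq_mul] at h
  rw [hmid, hexp, Real.exp_zero, Real.exp_log hc, min_eq_left hc2,
    min_eq_right (by nlinarith : 1 ≤ c ^ 2), min_eq_left (by nlinarith : c ≤ 2),
    min_eq_right hc1.le, min_self, min_eq_left one_le_two, one_add_one_eq_two] at h
  have hlt : Real.log ((c + 1) ^ 2) < Real.log (2 * (c ^ 2 + 1)) :=
    Real.log_lt_log (by positivity) (by nlinarith)
  rw [Real.log_pow, Real.log_mul two_ne_zero (by positivity)] at hlt
  push_cast at hlt
  linarith

/-- the measure with density 1_{[-1,2]} and A = [-1,1] give a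
counterexample: t ↦ μ(tA) is concave on [0,∞) but t ↦ μ(eᵗA) is not log-concave. -/
theorem stmt14 (μ : Measure ℝ)
    (hμ : μ = volume.withDensity (fun x => ENNReal.ofReal ((Set.Icc (-1:ℝ) 2).indicator 1 x)))
    (A : Set ℝ) (hA : A = Set.Icc (-1:ℝ) 1) :
    ConcaveOn ℝ (Set.Ici 0) (fun t : ℝ => (μ (t • A)).toReal) ∧
      ¬ ConcaveOn ℝ Set.univ (fun t : ℝ => Real.log ((μ (Real.exp t • A)).toReal)) := by
  have hμA : ∀ t : ℝ, 0 ≤ t → (μ (t • A)).toReal = min t 2 + min t 1 := fun t ht => by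
    rw [hμ, hA, withDensity_ofReal_indicator_one _ measurableSet_Icc,
      smul_Icc_of_nonneg ht (by norm_num), mul_neg_one, mul_one,
      volume_restrict_Icc_Icc_neg_toReal (by norm_num) (by norm_num) ht, neg_neg]
  refine ⟨((concaveOn_min_add_min 2 1).subset (subset_univ _) (convex_Ici 0)).congr
    fun t ht => (hμA t ht).symm, fun hconc => not_concaveOn_log_min_exp_add_min_exp ?_⟩
  exact hconc.congr fun s _ => by simp only [hμA _ (Real.exp_nonneg s)]
end

section
/- Let F : [0,∞) → [0,∞) be non-decreasing, with F(t)/tⁿ non-increasing on (0,∞) and t ↦ F(eᵗ) log-concave on ℝ. Then F^{1/n} is concave on (0,∞). -/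
/-!
Write `g s = log F(eˢ)`, so that `F t ^ (1/n) = exp (g (log t) / n)`. At a point `m > 0`, a
supergradient `c` of the concave function `g` at `log m` lies in `[0, n]`, because `g` is
non-decreasing and `g s - n s` is non-increasing. Hence `u ↦ F(m)^{1/n} (u/m)^{c/n}` is a concave
majorant of `F^{1/n}` touching it at `m`, and a function with such a majorant at every point is
concave. If `F` vanishes somewhere on `(0, ∞)`, it vanishes on all of `(0, ∞)`.
-/

open Real Set

theorem ConvexOn.add_rightDeriv_mul_sub_le {S : Set ℝ} {f : ℝ → ℝ} (hf : ConvexOn ℝ S f)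
    {x y : ℝ} (hx : x ∈ interior S) (hy : y ∈ S) :
    f x + derivWithin f (Ioi x) x * (y - x) ≤ f y := by
  rcases lt_trichotomy y x with hyx | rfl | hxy
  · have hslope : slope f y x ≤ derivWithin f (Ioi x) x :=
      (hf.slope_le_leftDeriv_of_mem_interior hy hx hyx).trans
        (hf.leftDeriv_le_rightDeriv_of_mem_interior hx)
    rw [slope_def_field, div_le_iff₀ (sub_pos.2 hyx)] at hslope
    nlinarith
  · simp
  · have hslope : derivWithin f (Ioi x) x ≤ slope f x y :=
      hf.rightDeriv_le_slope_of_mem_interior hx hy hxy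
    rw [slope_def_field, le_div_iff₀ (sub_pos.2 hxy)] at hslope
    linarith

theorem ConcaveOn.exists_le_add_mul_sub {S : Set ℝ} {f : ℝ → ℝ} (hf : ConcaveOn ℝ S f)
    {x : ℝ} (hx : x ∈ interior S) : ∃ c, ∀ y ∈ S, f y ≤ f x + c * (y - x) :=
  ⟨-derivWithin (-f) (Ioi x) x, fun y hy => by
    have := hf.neg.add_rightDeriv_mul_sub_le hx hy
    simp only [Pi.neg_apply] at this
    linarith⟩

theorem mem_Icc_of_le_add_mul_sub {g : ℝ → ℝ} {p c s₀ : ℝ} (hmono : Monotone g)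
    (hanti : Antitone fun s => g s - p * s) (hc : ∀ s, g s ≤ g s₀ + c * (s - s₀)) :
    c ∈ Icc 0 p := by
  have hup : g s₀ ≤ g (s₀ + 1) := hmono (by linarith)
  have hdown : g s₀ - p * s₀ ≤ g (s₀ - 1) - p * (s₀ - 1) := hanti (by linarith)
  constructor <;> linarith [hc (s₀ + 1), hc (s₀ - 1)]

theorem concaveOn_exp_comp_log_div {g : ℝ → ℝ} {p : ℝ} (hp : 0 ≤ p) (hg : ConcaveOn ℝ univ g)
    (hmono : Monotone g) (hanti : Antitone fun s => g s - p * s) :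
    ConcaveOn ℝ (Ioi 0) fun t => exp (g (log t) / p) := by
  refine ⟨convex_Ioi 0, fun x (hx : 0 < x) y (hy : 0 < y) a b ha hb hab => ?_⟩
  set m := a * x + b * y
  have hm : 0 < m := by simpa using (convex_Ioi (0 : ℝ)) hx hy ha hb hab
  obtain ⟨c, hc⟩ := hg.exists_le_add_mul_sub (x := log m) (by simp)
  obtain ⟨hc₀, hcp⟩ := mem_Icc_of_le_add_mul_sub hmono hanti fun s => hc s (mem_univ s)
  have hle : ∀ u, 0 < u → exp (g (log u) / p) ≤
      exp (g (log m) / p) * (u / m) ^ (c / p) := by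
    intro u hu
    rw [rpow_def_of_pos (div_pos hu hm), log_div hu.ne' hm.ne', ← exp_add,
      exp_le_exp]
    calc g (log u) / p ≤ (g (log m) + c * (log u - log m)) / p :=
          div_le_div_of_nonneg_right (hc _ (mem_univ _)) hp
      _ = _ := by ring
  have hpow : a * (x / m) ^ (c / p) + b * (y / m) ^ (c / p) ≤ 1 := by
    have := (concaveOn_rpow (div_nonneg hc₀ hp) (div_le_one_of_le₀ hcp hp)).2
      (div_pos hx hm).le (div_pos hy hm).le ha hb hab
    simp only [smul_eq_mul] at this
    rwa [show a * (x / m) + b * (y / m) = 1 by field_simp; rfl, one_rpow] at this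
  simp only [smul_eq_mul]
  calc a * exp (g (log x) / p) + b * exp (g (log y) / p)
      ≤ a * (exp (g (log m) / p) * (x / m) ^ (c / p)) +
        b * (exp (g (log m) / p) * (y / m) ^ (c / p)) := by
        gcongr
        exacts [hle x hx, hle y hy]
    _ = exp (g (log m) / p) * (a * (x / m) ^ (c / p) + b * (y / m) ^ (c / p)) := by
        ring
    _ ≤ exp (g (log m) / p) := mul_le_of_le_one_right (exp_pos _).le hpow

theorem eqOn_zero_or_pos_of_monotoneOn_of_antitoneOn_div_pow {F : ℝ → ℝ} {n : ℕ}
    (hF : ∀ t ∈ Ici (0 : ℝ), 0 ≤ F t) (hmono : MonotoneOn F (Ici 0))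
    (hanti : AntitoneOn (fun t => F t / t ^ n) (Ioi 0)) :
    EqOn F 0 (Ioi 0) ∨ ∀ t ∈ Ioi (0 : ℝ), 0 < F t := by
  refine or_iff_not_imp_right.2 fun hpos => ?_
  push Not at hpos
  obtain ⟨s, hs, hFs⟩ := hpos
  intro t (ht : 0 < t)
  refine le_antisymm (show F t ≤ 0 from ?_) (hF t ht.le)
  rcases le_total t s with hts | hst
  · exact (hmono ht.le (mem_Ioi.1 hs).le hts).trans hFs
  · have := (hanti hs ht hst).trans (div_nonpos_of_nonpos_of_nonneg hFs (pow_nonneg hs.le n))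
    rwa [div_le_iff₀ (pow_pos ht n), zero_mul] at this

theorem stmt16_general (n : ℕ) (F : ℝ → ℝ)
    (hFpos : ∀ t ∈ Set.Ici (0:ℝ), 0 ≤ F t)
    (hFmono : MonotoneOn F (Set.Ici 0))
    (hFanti : AntitoneOn (fun t : ℝ => F t / t ^ n) (Set.Ioi 0))
    (hlog : ConcaveOn ℝ Set.univ (fun t : ℝ => Real.log (F (Real.exp t)))) :
    ConcaveOn ℝ (Set.Ioi 0) (fun t : ℝ => F t ^ (1 / (n : ℝ))) := by
  rcases eqOn_zero_or_pos_of_monotoneOn_of_antitoneOn_div_pow hFpos hFmono hFanti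
    with hzero | hpos
  · exact (concaveOn_const (0 ^ (1 / (n : ℝ))) (convex_Ioi 0)).congr fun t ht => by
      simp [hzero ht]
  have hFexp (s : ℝ) : 0 < F (exp s) := hpos _ (exp_pos s)
  refine (concaveOn_exp_comp_log_div n.cast_nonneg hlog ?_ ?_).congr fun t (ht : 0 < t) => ?_
  · exact fun s t hst => log_le_log (hFexp s)
      (hFmono (exp_pos s).le (exp_pos t).le (exp_le_exp.2 hst))
  · intro s t hst
    have := log_le_log (div_pos (hFexp t) (pow_pos (exp_pos t) n))
      (hFanti (exp_pos s) (exp_pos t) (exp_le_exp.2 hst))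
    simpa [log_div (hFexp _).ne', log_pow, mul_comm] using this
  · dsimp only
    rw [exp_log ht, rpow_def_of_pos (hpos t ht), div_eq_mul_one_div]

/-- if F : [0,∞) → [0,∞) is non-decreasing, F(t)/tⁿ is non-increasing on
(0,∞) and t ↦ F(eᵗ) is log-concave on ℝ, then F^{1/n} is concave on (0,∞). -/
theorem stmt16 (n : ℕ) (hn : 0 < n) (F : ℝ → ℝ)
    (hFpos : ∀ t ∈ Set.Ici (0:ℝ), 0 ≤ F t)
    (hFmono : MonotoneOn F (Set.Ici 0))
    (hFanti : AntitoneOn (fun t : ℝ => F t / t ^ n) (Set.Ioi 0))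
    (hlog : ConcaveOn ℝ Set.univ (fun t : ℝ => Real.log (F (Real.exp t)))) :
    ConcaveOn ℝ (Set.Ioi 0) (fun t : ℝ => F t ^ (1 / (n : ℝ))) :=
  stmt16_general n F hFpos hFmono hFanti hlog
end
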